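/- For every a ∈ (0,1] the map f_a is not expansive: for every ε > 0 there exist distinct points x, y ∈ [0,1] such that |f_a^n(x) − f_a^n(y)| ≤ ε for all integers n ≥ 0. -/

import Mathlib

open Set MeasureTheory

/-- The piecewise-affine `b`-branched sawtooth map on `[0,1]`:
`g1 b x = b*x - k` on `[k/b,(k+1)/b]` for `k ∈ {0,…,b-1}` even, and
`g1 b x = (k+1) - b*x` there for `k` odd.  (For `x ∈ [0,1]`, the index
`k = min ⌊b*x⌋ (b-1)` is exactly the branch index; at common endpoints of two
branches both formulas agree, so this agrees with the piecewise definition.) -/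
noncomputable def g1 (b : ℕ) (x : ℝ) : ℝ :=
  let k : ℤ := min ⌊(b : ℝ) * x⌋ ((b : ℤ) - 1)
  if Even k then (b : ℝ) * x - (k : ℝ) else ((k : ℝ) + 1) - (b : ℝ) * x

/-- `g_{a,b} = q_a ∘ g_{1,b} ∘ q_a⁻¹`, where `q_a x = x ^ a` (real power). -/
noncomputable def gab (a : ℝ) (b : ℕ) (x : ℝ) : ℝ := (g1 b (x ^ a⁻¹)) ^ a

/-- For `x ∈ I_n = (2^{-n}, 2^{-n+1}]` (with `n ≥ 1`), `nIdx x = n`. -/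
noncomputable def nIdx (x : ℝ) : ℕ := (⌊Real.logb 2 x⁻¹⌋ + 1).toNat

/-- The map `f_a : [0,1] → [0,1]`: on each interval `I_n = (2^{-n}, 2^{-n+1}]` it is
`A_n⁻¹ ∘ g_{a,2n+1} ∘ A_n`, where `A_n x = 2^n x - 1`, and `f_a 0 = 0`. -/
noncomputable def fa (a : ℝ) (x : ℝ) : ℝ :=
  if x ≤ 0 then 0
  else (gab a (2 * nIdx x + 1) ((2 : ℝ) ^ nIdx x * x - 1) + 1) / (2 : ℝ) ^ nIdx x

lemma g1_mem {b : ℕ} (hb : 1 ≤ b) {x : ℝ} (hx : x ∈ Set.Icc (0:ℝ) 1) :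
    g1 b x ∈ Set.Icc (0:ℝ) 1 := by
  obtain ⟨hx0, hx1⟩ := hx
  have hb0 : (0:ℝ) < b := by exact_mod_cast hb
  set k : ℤ := min ⌊(b : ℝ) * x⌋ ((b : ℤ) - 1) with hkdef
  have hk0 : 0 ≤ k := by
    apply le_min
    · exact Int.floor_nonneg.mpr (by positivity)
    · have : (1:ℤ) ≤ b := by exact_mod_cast hb
      omega
  have hklb : (k : ℝ) ≤ (b:ℝ) * x := by
    have h1 : (k:ℝ) ≤ (⌊(b:ℝ)*x⌋:ℝ) := by exact_mod_cast min_le_left _ _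
    exact le_trans h1 (Int.floor_le _)
  have hkub : (b:ℝ) * x ≤ (k:ℝ) + 1 := by
    rcases le_or_gt ⌊(b : ℝ) * x⌋ ((b : ℤ) - 1) with h | h
    · have hk : k = ⌊(b : ℝ) * x⌋ := min_eq_left h
      rw [hk]; exact le_of_lt (Int.lt_floor_add_one _)
    · have hk : k = (b : ℤ) - 1 := min_eq_right h.le
      have : (b:ℝ) * x ≤ b := by nlinarith
      rw [hk]; push_cast; linarith
  show (if Even k then (b : ℝ) * x - (k : ℝ) else ((k : ℝ) + 1) - (b : ℝ) * x) ∈ Set.Icc (0:ℝ) 1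
  split_ifs <;> exact ⟨by linarith, by linarith⟩

lemma gab_mem {a : ℝ} (ha : 0 < a) {b : ℕ} (hb : 1 ≤ b) {x : ℝ}
    (hx : x ∈ Set.Icc (0:ℝ) 1) : gab a b x ∈ Set.Icc (0:ℝ) 1 := by
  obtain ⟨hx0, hx1⟩ := hx
  have h1 : x ^ a⁻¹ ∈ Set.Icc (0:ℝ) 1 :=
    ⟨Real.rpow_nonneg hx0 _, Real.rpow_le_one hx0 hx1 (by positivity)⟩
  have h2 := g1_mem hb h1
  exact ⟨Real.rpow_nonneg h2.1 _, Real.rpow_le_one h2.1 h2.2 ha.le⟩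

lemma nIdx_spec {z : ℝ} (hz0 : 0 < z) (hz1 : z ≤ 1) :
    (1:ℝ) < 2 ^ nIdx z * z ∧ 2 ^ nIdx z * z ≤ 2 := by
  set L := Real.logb 2 z⁻¹ with hL
  have hzi : 1 ≤ z⁻¹ := one_le_inv_iff₀.mpr ⟨hz0, hz1⟩
  have hL0 : 0 ≤ L := Real.logb_nonneg one_lt_two hzi
  have hfl0 : 0 ≤ ⌊L⌋ := Int.floor_nonneg.mpr hL0
  have hk : (nIdx z : ℤ) = ⌊L⌋ + 1 := by
    rw [nIdx, ← hL, Int.toNat_of_nonneg (by omega)]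
  have hzL : (2:ℝ) ^ L = z⁻¹ := Real.rpow_logb (by norm_num) (by norm_num) (by positivity)
  constructor
  · have h1 : L < (nIdx z : ℝ) := by
      have := Int.lt_floor_add_one L
      have h2 : ((⌊L⌋:ℝ) + 1) = ((nIdx z : ℤ) : ℝ) := by rw [hk]; push_cast; ring
      push_cast at h2 ⊢
      linarith
    have h2 : z⁻¹ < (2:ℝ) ^ (nIdx z : ℝ) := by
      rw [← hzL]
      exact Real.rpow_lt_rpow_left_iff one_lt_two |>.mpr h1
    rw [Real.rpow_natCast] at h2
    calc (1:ℝ) = z⁻¹ * z := by field_simp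
    _ < 2 ^ nIdx z * z := by exact mul_lt_mul_of_pos_right h2 hz0
  · have h1 : (nIdx z : ℝ) - 1 ≤ L := by
      have := Int.floor_le L
      have h2 : ((⌊L⌋:ℝ)) = ((nIdx z : ℤ) : ℝ) - 1 := by rw [hk]; push_cast; ring
      push_cast at h2
      linarith
    have h2 : (2:ℝ) ^ ((nIdx z : ℝ) - 1) ≤ z⁻¹ := by
      rw [← hzL]
      exact Real.rpow_le_rpow_left_iff one_lt_two |>.mpr h1
    have h3 : (2:ℝ) ^ ((nIdx z : ℝ) - 1) = 2 ^ (nIdx z) / 2 := by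
      rw [Real.rpow_sub (by norm_num), Real.rpow_natCast, Real.rpow_one]
    rw [h3] at h2
    have h4 : (2:ℝ)^(nIdx z) ≤ 2 * z⁻¹ := by linarith
    calc (2:ℝ) ^ nIdx z * z ≤ 2 * z⁻¹ * z := mul_le_mul_of_nonneg_right h4 hz0.le
    _ = 2 := by field_simp

lemma fa_bound {a : ℝ} (ha : 0 < a) (m : ℕ) {z : ℝ} (hz0 : 0 ≤ z)
    (hz : z ≤ (1/2:ℝ)^m) : 0 ≤ fa a z ∧ fa a z ≤ (1/2:ℝ)^m := by
  rcases le_or_gt z 0 with h | h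
  · rw [fa, if_pos h]; exact ⟨le_refl 0, by positivity⟩
  · have hz1 : z ≤ 1 := hz.trans (by apply pow_le_one₀ <;> norm_num)
    obtain ⟨hlo, hhi⟩ := nIdx_spec h hz1
    rw [fa, if_neg (not_le.mpr h)]
    set k := nIdx z with hkdef
    have hkm : m < k := by
      have h1 : (1:ℝ) < 2 ^ k * (1/2)^m := lt_of_lt_of_le hlo
        (mul_le_mul_of_nonneg_left hz (by positivity))
      by_contra hc
      push_neg at hc
      have : (2:ℝ)^k * (1/2)^m ≤ 1 := by
        have : (2:ℝ)^k ≤ 2^m := pow_le_pow_right₀ one_le_two hc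
        calc (2:ℝ)^k * (1/2)^m ≤ 2^m * (1/2)^m :=
          mul_le_mul_of_nonneg_right this (by positivity)
        _ = 1 := by rw [← mul_pow]; norm_num
      linarith
    have harg : (2:ℝ)^k * z - 1 ∈ Set.Icc (0:ℝ) 1 := ⟨by linarith, by linarith⟩
    have hg := gab_mem ha (b := 2*k+1) (by omega) harg
    constructor
    · exact div_nonneg (by linarith [hg.1]) (by positivity)
    · rw [div_le_iff₀ (by positivity)]
      have h2 : (1/2:ℝ)^m * 2^k = 2^k / 2^m := by
        rw [div_pow, one_pow]; ring
      rw [h2, le_div_iff₀ (by positivity)]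
      have h3 : (2:ℝ)^m * 2 ≤ 2^k := by
        have : (2:ℝ)^(m+1) ≤ 2^k := pow_le_pow_right₀ one_le_two hkm
        rw [pow_succ] at this; linarith
      nlinarith [hg.2, hg.1, pow_pos (by norm_num : (0:ℝ) < 2) m]

/-- For every `a ∈ (0,1]`, the map `f_a` is not expansive: for every `ε > 0` there
are distinct `x, y ∈ [0,1]` whose orbits stay `ε`-close for all time. -/
theorem fa_not_expansive (a : ℝ) (ha : a ∈ Set.Ioc (0 : ℝ) 1) :
    ∀ ε > (0 : ℝ), ∃ x ∈ Set.Icc (0 : ℝ) 1, ∃ y ∈ Set.Icc (0 : ℝ) 1,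
      x ≠ y ∧ ∀ n : ℕ, |(fa a)^[n] x - (fa a)^[n] y| ≤ ε := by
  intro ε hε
  obtain ⟨m, hm⟩ := exists_pow_lt_of_lt_one hε (by norm_num : (1/2:ℝ) < 1)
  refine ⟨0, by constructor <;> norm_num, ((1/2:ℝ))^m, ⟨by positivity, by
    apply pow_le_one₀ <;> norm_num⟩, ne_of_lt (pow_pos (by norm_num) m), ?_⟩
  have hx : ∀ n : ℕ, (fa a)^[n] 0 = 0 := by
    intro n
    induction n with
    | zero => simp
    | succ n ih => rw [Function.iterate_succ_apply', ih, fa, if_pos le_rfl]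
  have hy : ∀ n : ℕ, 0 ≤ (fa a)^[n] ((1/2:ℝ)^m) ∧ (fa a)^[n] ((1/2:ℝ)^m) ≤ (1/2:ℝ)^m := by
    intro n
    induction n with
    | zero =>
      simp only [Function.iterate_zero_apply]
      exact ⟨by positivity, le_rfl⟩
    | succ n ih =>
      rw [Function.iterate_succ_apply']
      exact fa_bound ha.1 m ih.1 ih.2
  intro n
  rw [hx n]
  rw [abs_sub_comm, abs_of_nonneg (by simpa using (hy n).1)]
  simpa using le_trans (hy n).2 hm.le
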